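/- Let N ≥ 2 be an integer, let a = (a₁,…,a_N) ∈ ℂ^N with Re(a_i) > 0 for every i, let x ∈ ℂ with Re(x) > 0, and let s ∈ ℂ with Re(s) > N. Then ∑_{n ∈ (ℤ_{≥0})^N} (x + n·a)^{−s} − ∑_{n ∈ (ℤ_{≥0})^N} (x + a₁ + n·a)^{−s} = ∑_{m ∈ (ℤ_{≥0})^{N−1}} (x + m₁a₂ + ⋯ + m_{N−1}a_N)^{−s}, where all three series converge absolutely; i.e. the Barnes multiple zeta function satisfies the difference equation ζ_N(s, x | a) − ζ_N(s, x + a₁ | a) = ζ_{N−1}(s, x | (a₂,…,a_N)). -/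

import Mathlib

/-!
Splitting the index `n ∈ ℕᴺ` as `(n₁, m)`, the terms of `ζ_N(s, x + a₁ | a)` are exactly the
terms of `ζ_N(s, x | a)` with `n₁ ≥ 1`, so the difference is the slice `n₁ = 0`, which is
`ζ_{N-1}(s, x | (a₂,…,a_N))`. Absolute convergence: `|z^{-s}| ≤ e^{π |Im s|} (Re z)^{-Re s}`, and
`Re (x + n·a) ≥ cᵢ (nᵢ + 1)` with `cᵢ = min (Re x) (Re aᵢ)` for each `i`, so writing
`Re s = N · (Re s / N)` dominates the series by a product of `N` convergent `p`-series with
`p = Re s / N > 1`.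
-/

open Complex

theorem norm_exp_neg_mul_log_le {s z : ℂ} (hs : 0 ≤ s.re) (hz : 0 < z.re) :
    ‖exp (-s * log z)‖ ≤ Real.exp (|s.im| * Real.pi) * z.re ^ (-s.re) := by
  have hre : (-s * log z).re = Real.log ‖z‖ * -s.re + s.im * arg z := by
    simp only [neg_mul, neg_re, mul_re, log_re, log_im]
    ring
  have harg : s.im * arg z ≤ |s.im| * Real.pi :=
    (le_abs_self _).trans <| (abs_mul _ _).trans_le <|
      mul_le_mul_of_nonneg_left (abs_arg_le_pi z) (abs_nonneg _)
  have hnorm : ‖z‖ ^ (-s.re) ≤ z.re ^ (-s.re) :=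
    Real.rpow_le_rpow_of_nonpos hz (re_le_norm z) (neg_nonpos.2 hs)
  rw [norm_exp, hre, Real.exp_add, ← Real.rpow_def_of_pos (hz.trans_le (re_le_norm z)), mul_comm]
  exact mul_le_mul (Real.exp_le_exp.2 harg) hnorm (by positivity) (Real.exp_pos _).le

theorem summable_mul_nat_add_one_rpow_neg {c t : ℝ} (hc : 0 ≤ c) (ht : 1 < t) :
    Summable fun k : ℕ => (c * (k + 1)) ^ (-t) := by
  have h := (summable_nat_add_iff 1).2 (Real.summable_nat_rpow.2 (neg_lt_neg ht))
  refine (h.mul_left (c ^ (-t))).congr fun k => ?_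
  rw [Real.mul_rpow hc (by positivity), Nat.cast_add_one]

theorem summable_fin_prod_of_nonneg {α : Type*} {n : ℕ} {f : Fin n → α → ℝ}
    (hf₀ : ∀ i a, 0 ≤ f i a) (hf : ∀ i, Summable (f i)) :
    Summable fun m : Fin n → α => ∏ i, f i (m i) := by
  induction n with
  | zero => exact Summable.of_finite
  | succ n ih =>
    rw [← (Fin.consEquiv fun _ => α).summable_iff]
    have hprod := (hf 0).mul_of_nonneg (ih (f := fun i => f i.succ) (fun i => hf₀ _) fun i => hf _)
      (hf₀ 0) fun m => Finset.prod_nonneg fun i _ => hf₀ _ _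
    simpa [Function.comp_def, Fin.prod_univ_succ] using hprod

theorem Summable.tsum_sub_tsum_succ_fst {E β : Type*} [AddCommGroup E] [UniformSpace E]
    [IsUniformAddGroup E] [CompleteSpace E] [T2Space E] {G : ℕ × β → E} (hG : Summable G) :
    ∑' p, G p - ∑' p : ℕ × β, G (p.1 + 1, p.2) = ∑' m, G (0, m) := by
  have hshift : Summable fun p : ℕ × β => G (p.1 + 1, p.2) :=
    hG.comp_injective fun p q h => by simpa [Prod.ext_iff] using h
  rw [hG.tsum_prod, hshift.tsum_prod, hG.prod.tsum_eq_zero_add, add_sub_cancel_right]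

theorem Summable.tsum_sub_tsum_add_single_zero {E : Type*} [AddCommGroup E] [UniformSpace E]
    [IsUniformAddGroup E] [CompleteSpace E] [T2Space E] {n : ℕ} {F : (Fin (n + 1) → ℕ) → E}
    (hF : Summable F) :
    ∑' m, F m - ∑' m, F (m + (Pi.single 0 1 : Fin (n + 1) → ℕ)) =
      ∑' m : Fin n → ℕ, F (Fin.cons 0 m) := by
  let e := Fin.consEquiv fun _ : Fin (n + 1) => ℕ
  have hshift (p : ℕ × (Fin n → ℕ)) :
      e p + (Pi.single 0 1 : Fin (n + 1) → ℕ) = e (p.1 + 1, p.2) := by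
    ext i
    cases i using Fin.cases <;> simp [e]
  rw [← e.tsum_eq F, ← e.tsum_eq fun m => F (m + (Pi.single 0 1 : Fin (n + 1) → ℕ))]
  simp_rw [hshift]
  exact (e.summable_iff.2 hF).tsum_sub_tsum_succ_fst

noncomputable def barnesTerm {n : ℕ} (s x : ℂ) (a : Fin n → ℂ) (m : Fin n → ℕ) : ℂ :=
  exp (-s * log (x + ∑ i, (m i : ℂ) * a i))

theorem barnesTerm_add_single {n : ℕ} (s x : ℂ) (a : Fin n → ℂ) (m : Fin n → ℕ) (j : Fin n) :
    barnesTerm s x a (m + (Pi.single j 1 : Fin n → ℕ)) = barnesTerm s (x + a j) a m := by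
  have hsum :
      ∑ i, ((m + (Pi.single j 1 : Fin n → ℕ)) i : ℂ) * a i = ∑ i, (m i : ℂ) * a i + a j := by
    simp [Pi.single_apply, add_mul, Finset.sum_add_distrib]
  rw [barnesTerm, barnesTerm, hsum, add_comm _ (a j), add_assoc]

theorem barnesTerm_cons_zero {n : ℕ} (s x : ℂ) (a : Fin (n + 1) → ℂ) (m : Fin n → ℕ) :
    barnesTerm s x a (Fin.cons 0 m) = barnesTerm s x (Fin.tail a) m := by
  simp [barnesTerm, Fin.sum_univ_succ, Fin.tail]

theorem min_re_mul_add_one_le_re_add_sum {n : ℕ} {x : ℂ} {a : Fin n → ℂ} (ha : ∀ i, 0 ≤ (a i).re)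
    (m : Fin n → ℕ) (i : Fin n) :
    min x.re (a i).re * (m i + 1) ≤ (x + ∑ j, (m j : ℂ) * a j).re := by
  have hsingle : (m i : ℝ) * (a i).re ≤ ∑ j, (m j : ℝ) * (a j).re :=
    Finset.single_le_sum (f := fun j => (m j : ℝ) * (a j).re)
      (fun j _ => mul_nonneg (Nat.cast_nonneg _) (ha j)) (Finset.mem_univ i)
  have hre : (x + ∑ j, (m j : ℂ) * a j).re = x.re + ∑ j, (m j : ℝ) * (a j).re := by
    simp [re_sum]
  rw [hre]
  nlinarith [min_le_left x.re (a i).re, min_le_right x.re (a i).re, (m i).cast_nonneg (α := ℝ)]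

theorem norm_barnesTerm_le {n : ℕ} {s x : ℂ} {a : Fin n → ℂ} (hn : 0 < n) (hs : 0 ≤ s.re)
    (hx : 0 < x.re) (ha : ∀ i, 0 < (a i).re) (m : Fin n → ℕ) :
    ‖barnesTerm s x a m‖ ≤
      Real.exp (|s.im| * Real.pi) * ∏ i, (min x.re (a i).re * (m i + 1)) ^ (-(s.re / n)) := by
  have hlower := min_re_mul_add_one_le_re_add_sum (x := x) (fun i => (ha i).le) m
  have hfactor (i : Fin n) : 0 < min x.re (a i).re * (m i + 1) :=
    mul_pos (lt_min hx (ha i)) (by positivity)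
  have hz : 0 < (x + ∑ i, (m i : ℂ) * a i).re := (hfactor ⟨0, hn⟩).trans_le (hlower _)
  calc ‖barnesTerm s x a m‖
      ≤ Real.exp (|s.im| * Real.pi) * (x + ∑ i, (m i : ℂ) * a i).re ^ (-s.re) :=
        norm_exp_neg_mul_log_le hs hz
    _ = Real.exp (|s.im| * Real.pi) *
          ∏ _i : Fin n, (x + ∑ i, (m i : ℂ) * a i).re ^ (-(s.re / n)) := by
        rw [Finset.prod_const, Finset.card_fin, ← Real.rpow_natCast, ← Real.rpow_mul hz.le,
          neg_mul, div_mul_cancel₀ _ (by positivity)]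
    _ ≤ Real.exp (|s.im| * Real.pi) * ∏ i, (min x.re (a i).re * (m i + 1)) ^ (-(s.re / n)) := by
        refine mul_le_mul_of_nonneg_left (Finset.prod_le_prod (fun i _ => by positivity)
          fun i _ => ?_) (Real.exp_pos _).le
        exact Real.rpow_le_rpow_of_nonpos (hfactor i) (hlower i) (neg_nonpos.2 (by positivity))

theorem summable_norm_barnesTerm {n : ℕ} {s x : ℂ} {a : Fin n → ℂ} (hs : (n : ℝ) < s.re)
    (hx : 0 < x.re) (ha : ∀ i, 0 < (a i).re) : Summable fun m => ‖barnesTerm s x a m‖ := by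
  rcases n.eq_zero_or_pos with rfl | hn
  · exact Summable.of_finite
  have ht : 1 < s.re / n := (one_lt_div (by positivity)).2 hs
  have hc (i : Fin n) : 0 < min x.re (a i).re := lt_min hx (ha i)
  have hprod : Summable fun m : Fin n → ℕ =>
      ∏ i, (min x.re (a i).re * (m i + 1)) ^ (-(s.re / n)) :=
    summable_fin_prod_of_nonneg
      (f := fun (i : Fin n) (k : ℕ) => (min x.re (a i).re * (k + 1)) ^ (-(s.re / n)))
      (fun i k => by have := hc i; positivity)
      fun i => summable_mul_nat_add_one_rpow_neg (hc i).le ht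
  exact .of_nonneg_of_le (fun _ => norm_nonneg _)
    (norm_barnesTerm_le hn ((Nat.cast_nonneg n).trans hs.le) hx ha) (hprod.mul_left _)

/-- (Difference equation for the Barnes multiple zeta function.)
Let `N ≥ 2`, let `a = (a₁,…,a_N) ∈ ℂᴺ` with `Re(aᵢ) > 0`, let `x ∈ ℂ` with `Re(x) > 0`,
and let `s ∈ ℂ` with `Re(s) > N`.  Then all three series below converge absolutely and
`ζ_N(s, x | a) − ζ_N(s, x + a₁ | a) = ζ_{N−1}(s, x | (a₂,…,a_N))`. -/
theorem barnes_zeta_difference_equation (N : ℕ) (hN : 2 ≤ N) (a : Fin N → ℂ)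
    (ha : ∀ i, 0 < (a i).re) (x : ℂ) (hx : 0 < x.re) (s : ℂ) (hs : (N : ℝ) < s.re) :
    (Summable fun n : Fin N → ℕ =>
        ‖Complex.exp (-s * Complex.log (x + ∑ i, (n i : ℂ) * a i))‖) ∧
    (Summable fun n : Fin N → ℕ =>
        ‖Complex.exp (-s * Complex.log (x + a ⟨0, by omega⟩ + ∑ i, (n i : ℂ) * a i))‖) ∧
    (Summable fun m : Fin (N - 1) → ℕ =>
        ‖Complex.exp (-s * Complex.log
          (x + ∑ i : Fin (N - 1), (m i : ℂ) * a (Fin.cast (by omega) i.succ)))‖) ∧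
    (∑' n : Fin N → ℕ, Complex.exp (-s * Complex.log (x + ∑ i, (n i : ℂ) * a i))) -
        (∑' n : Fin N → ℕ,
          Complex.exp (-s * Complex.log (x + a ⟨0, by omega⟩ + ∑ i, (n i : ℂ) * a i))) =
      ∑' m : Fin (N - 1) → ℕ,
        Complex.exp (-s * Complex.log
          (x + ∑ i : Fin (N - 1), (m i : ℂ) * a (Fin.cast (by omega) i.succ))) := by
  obtain ⟨n, rfl⟩ : ∃ n, N = n + 1 := ⟨N - 1, by omega⟩
  have hsn : (n : ℝ) < s.re := by push_cast at hs; linarith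
  have hx₀ : 0 < (x + a 0).re := by rw [add_re]; linarith [ha 0]
  have hsum := summable_norm_barnesTerm hs hx ha
  have hdiff := (Summable.of_norm (f := barnesTerm s x a) hsum).tsum_sub_tsum_add_single_zero
  simp only [barnesTerm_add_single, barnesTerm_cons_zero] at hdiff
  exact ⟨hsum, summable_norm_barnesTerm hs hx₀ ha,
    summable_norm_barnesTerm (a := Fin.tail a) hsn hx fun i => ha _, hdiff⟩
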